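/- The function f_HD(k) = (1 - wλ(1/R_a + (2(K-k)+1)/R_b))/(2(K+1)/R_b + w(k+1)/R_a), viewed as a real function of k ∈ [1, K), is monotonically decreasing in k if λ ≤ R_a / (4(K+1)(R_a/R_b)² + (2K+3)w(R_a/R_b) + w), and monotonically increasing otherwise. -/

import Mathlib

open Set

/-- Interior bottleneck function `f_HD` viewed as a real function of `k`. -/
noncomputable def fHDreal (K w lam Ra Rb k : ℝ) : ℝ :=
  (1 - w * lam * (1 / Ra + (2 * (K - k) + 1) / Rb)) /
    (2 * (K + 1) / Rb + w * (k + 1) / Ra)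

/-!
After clearing the fractions `1/R_a`, `1/R_b` from the coefficients, `f_HD` is a Möbius function
`k ↦ (a + b k) / (c + d k)` whose denominator is positive on `[1, K)`. Such a function is monotone
or antitone according to the sign of the determinant `b c - a d`, which does not depend on `k`;
here `b c - a d = w (λ Q - 1/R_a)` with `Q = 4(K+1)/R_b² + (2K+3)w/(R_a R_b) + w/R_a²`, and the
threshold of the theorem is exactly `1/(R_a Q)`.
-/

section DivAffine

variable {𝕜 : Type*} [Field 𝕜] {a b c d : 𝕜}

theorem div_affine_sub_div_affine {x y : 𝕜} (hx : c + d * x ≠ 0) (hy : c + d * y ≠ 0) :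
    (a + b * y) / (c + d * y) - (a + b * x) / (c + d * x) =
      (b * c - a * d) * (y - x) / ((c + d * x) * (c + d * y)) := by
  rw [div_sub_div _ _ hy hx, mul_comm (c + d * y) (c + d * x)]
  congr 1
  ring

variable [LinearOrder 𝕜] [IsStrictOrderedRing 𝕜]

theorem monotoneOn_div_affine {s : Set 𝕜} (hden : ∀ x ∈ s, 0 < c + d * x)
    (hdet : 0 ≤ b * c - a * d) : MonotoneOn (fun x => (a + b * x) / (c + d * x)) s := by
  intro x hx y hy hxy
  have hx' := hden x hx
  have hy' := hden y hy
  rw [← sub_nonneg, div_affine_sub_div_affine hx'.ne' hy'.ne']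
  exact div_nonneg (mul_nonneg hdet (sub_nonneg.2 hxy)) (mul_pos hx' hy').le

theorem antitoneOn_div_affine {s : Set 𝕜} (hden : ∀ x ∈ s, 0 < c + d * x)
    (hdet : b * c - a * d ≤ 0) : AntitoneOn (fun x => (a + b * x) / (c + d * x)) s := by
  intro x hx y hy hxy
  have hx' := hden x hx
  have hy' := hden y hy
  rw [← sub_nonpos, div_affine_sub_div_affine hx'.ne' hy'.ne']
  exact div_nonpos_of_nonpos_of_nonneg (mul_nonpos_of_nonpos_of_nonneg hdet (sub_nonneg.2 hxy))
    (mul_pos hx' hy').le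

end DivAffine

section FHD

variable (K w lam Ra Rb : ℝ)

theorem fHDreal_eq_div_affine :
    fHDreal K w lam Ra Rb = fun k =>
      ((1 - w * lam * (1 / Ra + (2 * K + 1) / Rb)) + 2 * w * lam / Rb * k) /
        ((2 * (K + 1) / Rb + w / Ra) + w / Ra * k) := by
  funext k
  unfold fHDreal
  congr 1 <;> ring

theorem fHDreal_det :
    2 * w * lam / Rb * (2 * (K + 1) / Rb + w / Ra) -
        (1 - w * lam * (1 / Ra + (2 * K + 1) / Rb)) * (w / Ra) =
      w * (lam * (4 * (K + 1) / Rb ^ 2 + (2 * K + 3) * w / (Ra * Rb) + w / Ra ^ 2) - 1 / Ra) := by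
  ring

variable {K w Ra Rb}

theorem fHDreal_threshold_eq (hRa : Ra ≠ 0) (hRb : Rb ≠ 0) :
    Ra / (4 * (K + 1) * (Ra / Rb) ^ 2 + (2 * K + 3) * w * (Ra / Rb) + w) =
      1 / Ra / (4 * (K + 1) / Rb ^ 2 + (2 * K + 3) * w / (Ra * Rb) + w / Ra ^ 2) := by
  field_simp

end FHD

theorem fHDreal_monotone_general
    (K w lam Ra Rb : ℝ) (hK : 2 ≤ K) (hw : 1 ≤ w)
    (hRa : 0 < Ra) (hRb : 0 < Rb) :
    (lam ≤ Ra / (4 * (K + 1) * (Ra / Rb) ^ 2 + (2 * K + 3) * w * (Ra / Rb) + w) →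
      AntitoneOn (fHDreal K w lam Ra Rb) (Ico 1 K)) ∧
    (Ra / (4 * (K + 1) * (Ra / Rb) ^ 2 + (2 * K + 3) * w * (Ra / Rb) + w) < lam →
      MonotoneOn (fHDreal K w lam Ra Rb) (Ico 1 K)) := by
  have hw0 : 0 ≤ w := by linarith
  have hQ : 0 < 4 * (K + 1) / Rb ^ 2 + (2 * K + 3) * w / (Ra * Rb) + w / Ra ^ 2 := by
    positivity
  have hden : ∀ k ∈ Ico 1 K, 0 < 2 * (K + 1) / Rb + w / Ra + w / Ra * k := by
    rintro k ⟨hk, -⟩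
    positivity
  rw [fHDreal_threshold_eq hRa.ne' hRb.ne', fHDreal_eq_div_affine]
  constructor
  · intro hlam
    refine antitoneOn_div_affine hden ?_
    rw [fHDreal_det]
    exact mul_nonpos_of_nonneg_of_nonpos hw0 (sub_nonpos.2 ((le_div_iff₀ hQ).1 hlam))
  · intro hlam
    refine monotoneOn_div_affine hden ?_
    rw [fHDreal_det]
    exact mul_nonneg hw0 (sub_nonneg.2 ((div_lt_iff₀ hQ).1 hlam).le)

/-- The function `k ↦ f_HD(k)` on `[1, K)` is monotonically decreasing if
`λ ≤ R_a / (4(K+1)(R_a/R_b)² + (2K+3)w(R_a/R_b) + w)`, and monotonically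
increasing otherwise. -/
theorem fHDreal_monotone
    (K w lam Ra Rb : ℝ) (hK : 2 ≤ K) (hw : 1 ≤ w)
    (hlam : 0 < lam) (hRa : 0 < Ra) (hRb : 0 < Rb) :
    (lam ≤ Ra / (4 * (K + 1) * (Ra / Rb) ^ 2 + (2 * K + 3) * w * (Ra / Rb) + w) →
      AntitoneOn (fHDreal K w lam Ra Rb) (Ico 1 K)) ∧
    (Ra / (4 * (K + 1) * (Ra / Rb) ^ 2 + (2 * K + 3) * w * (Ra / Rb) + w) < lam →
      MonotoneOn (fHDreal K w lam Ra Rb) (Ico 1 K)) :=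
  fHDreal_monotone_general K w lam Ra Rb hK hw hRa hRb
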